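/- arXiv:1205.4687 — 8 statements merged into one kernel-verified Lean document; each statement's English description precedes it below -/
import Mathlib

section
/- Let p be an odd prime, let a ≥ 1 be an integer, let b = ⌈a/3⌉, and let χ be a Dirichlet character modulo p^a. Then there exists an integer L, depending only on χ, p, a, b (independent of x), such that for every integer x, χ(1 + p^b x) = exp(2πi · L · (2 p^b x − p^{2b} x²) / p^a) (equivalently, χ(1 + p^b x) = exp(4πi L x / p^{a−b} − 2πi L x² / p^{a−2b}) when a ≥ 2b). -/
/-!
Put `c = p^b` and `q = p^(a-b)`. Since `a ≤ 3b`, `c³ = 0` in `ZMod (p^a)`, so there the truncated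
exponential `E(t) = 1 + t + t²/2` (written `1 + t + h t²` with `2h = 1`) is multiplicative on
`c · ZMod (p^a)` and inverts the truncated logarithm `s ↦ s - s²/2`. Hence `u ↦ χ(E(c u / 2))` is an
additive character of `ℤ` trivial on `qℤ`, i.e. `u ↦ exp(2πi L u / q)` for some `L`, while
`1 + c x = E(c ψ(x) / 2)` with `ψ(x) = 2x - c x²`, and `ψ(x) / q = (2 c x - c² x²) / p^a`.
-/

open Complex

section TruncExp

variable {R : Type*} [CommRing R]

def truncExp (h t : R) : R := 1 + t + h * t ^ 2

theorem truncExp_mul_add {h c : R} (h2 : 2 * h = 1) (hc : c ^ 3 = 0) (u v : R) :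
    truncExp h (c * (u + v)) = truncExp h (c * u) * truncExp h (c * v) := by
  unfold truncExp
  linear_combination
    (c ^ 2 * u * v) * h2 - (h * u * v * (u + v) + h ^ 2 * c * u ^ 2 * v ^ 2) * hc

theorem truncExp_sub_mul_sq (h : R) {s : R} (hs : s ^ 3 = 0) :
    truncExp h (s - h * s ^ 2) = 1 + s := by
  unfold truncExp
  linear_combination (h ^ 3 * s - 2 * h ^ 2) * hs

def truncExpAddChar {h c : R} (h2 : 2 * h = 1) (hc : c ^ 3 = 0) : AddChar R R where
  toFun u := truncExp h (c * u)
  map_zero_eq_one' := by simp [truncExp]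
  map_add_eq_mul' := truncExp_mul_add h2 hc

end TruncExp

theorem AddChar.exists_int_eq_cexp {q : ℕ} [NeZero q] (g : AddChar ℤ ℂ) (hg : g q = 1) :
    ∃ L : ℤ, ∀ u : ℤ, g u = exp (2 * Real.pi * I * L * u / q) := by
  have hroot : g 1 ^ q = 1 := by rw [← g.map_nsmul_eq_pow, nsmul_one, hg]
  obtain ⟨L, -, hL⟩ :=
    (isPrimitiveRoot_exp q (NeZero.ne q)).eq_pow_of_pow_eq_one hroot
  refine ⟨L, fun u => ?_⟩
  rw [← mul_one u, ← smul_eq_mul, g.map_zsmul_eq_zpow, ← hL, ← zpow_natCast, ← zpow_mul,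
    ← exp_int_mul]
  push_cast
  ring_nf

theorem le_and_le_three_mul_of_eq_ceil_div_three {a b : ℕ} (hb : (b : ℤ) = ⌈(a : ℚ) / 3⌉) :
    b ≤ a ∧ a ≤ 3 * b := by
  have hle : (b : ℤ) ≤ a :=
    hb ▸ Int.ceil_le.mpr (by push_cast; linarith [(a.cast_nonneg : (0 : ℚ) ≤ a)])
  have hge : (a : ℚ) / 3 ≤ b := by exact_mod_cast hb ▸ Int.le_ceil ((a : ℚ) / 3)
  constructor
  · exact_mod_cast hle
  · have : (a : ℚ) ≤ 3 * b := by linarith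
    exact_mod_cast this

theorem MonoidHom.exists_map_one_add_mul_eq_cexp {R : Type*} [CommRing R] (χ : R →* ℂ)
    (hu2 : IsUnit (2 : R)) {k : ℤ} (hk : (k : R) ^ 3 = 0) {q : ℕ} [NeZero q]
    (hkq : (k * q : R) = 0) :
    ∃ L : ℤ, ∀ x : ℤ, χ (1 + k * x) = exp (2 * Real.pi * I * L * (2 * x - k * x ^ 2) / q) := by
  obtain ⟨h, h2⟩ := hu2.exists_right_inv
  have hkh : ((k : R) * h) ^ 3 = 0 := by rw [mul_pow, hk, zero_mul]
  let g : AddChar ℤ ℂ :=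
    χ.compAddChar ((truncExpAddChar h2 hkh).compAddMonoidHom (Int.castAddHom R))
  have hgq : g q = 1 := by
    change χ (truncExp h (k * h * ((q : ℤ) : R))) = 1
    rw [Int.cast_natCast, mul_right_comm, hkq, zero_mul]
    simp [truncExp]
  obtain ⟨L, hL⟩ := g.exists_int_eq_cexp hgq
  refine ⟨L, fun x => ?_⟩
  have hlog : k * h * ((2 * x - k * x ^ 2 : ℤ) : R) = k * x - h * (k * x) ^ 2 := by
    push_cast
    linear_combination (k * x : R) * h2
  calc χ (1 + k * x) = χ (truncExp h (k * h * ((2 * x - k * x ^ 2 : ℤ) : R))) := by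
        rw [hlog, truncExp_sub_mul_sq h (by rw [mul_pow, hk, zero_mul])]
    _ = g (2 * x - k * x ^ 2) := rfl
    _ = _ := by rw [hL]; push_cast; rfl

theorem stmt0_general (p : ℕ) (hp : p.Prime) (hp2 : p ≠ 2) (a : ℕ)
    (b : ℕ) (hb : (b : ℤ) = ⌈(a : ℚ) / 3⌉)
    (χ : DirichletCharacter ℂ (p ^ a)) :
    ∃ L : ℤ, ∀ x : ℤ,
      χ ((1 + (p : ℤ) ^ b * x : ℤ) : ZMod (p ^ a)) =
        Complex.exp (2 * (Real.pi : ℂ) * Complex.I * (L : ℂ) *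
          (2 * (p : ℂ) ^ b * (x : ℂ) - (p : ℂ) ^ (2 * b) * (x : ℂ) ^ 2) / (p : ℂ) ^ a) := by
  obtain ⟨hba, ha3b⟩ := le_and_le_three_mul_of_eq_ceil_div_three hb
  have h2 : IsUnit (2 : ZMod (p ^ a)) := by
    exact_mod_cast (ZMod.isUnit_iff_coprime 2 _).mpr
      (Nat.coprime_two_left.mpr (hp.odd_of_ne_two hp2).pow)
  have hk : (((p ^ b : ℕ) : ℤ) : ZMod (p ^ a)) ^ 3 = 0 := by
    rw [Int.cast_natCast, ← Nat.cast_pow, ZMod.natCast_eq_zero_iff, ← pow_mul]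
    exact pow_dvd_pow p (by omega)
  have hkq : (((p ^ b : ℕ) : ℤ) * (p ^ (a - b) : ℕ) : ZMod (p ^ a)) = 0 := by
    rw [Int.cast_natCast, ← Nat.cast_mul, ← pow_add, Nat.add_sub_cancel' hba, ZMod.natCast_self]
  have : NeZero (p ^ (a - b)) := ⟨pow_ne_zero _ hp.ne_zero⟩
  obtain ⟨L, hL⟩ := (χ : ZMod (p ^ a) →* ℂ).exists_map_one_add_mul_eq_cexp h2 hk hkq
  refine ⟨L, fun x => ?_⟩
  have hp0 : (p : ℂ) ≠ 0 := by exact_mod_cast hp.ne_zero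
  have hpa : (p : ℂ) ^ a = (p : ℂ) ^ b * (p : ℂ) ^ (a - b) := by
    rw [← pow_add, Nat.add_sub_cancel' hba]
  have hcast : ((1 + (p : ℤ) ^ b * x : ℤ) : ZMod (p ^ a)) = 1 + ((p ^ b : ℕ) : ℤ) * x := by
    push_cast; rfl
  rw [hcast]
  refine (hL x).trans (congrArg exp ?_)
  rw [hpa]
  push_cast
  field_simp
  ring

/-- **Postnikov character formula, odd prime case.**
Let `p` be an odd prime, `a ≥ 1`, `b = ⌈a/3⌉`, and `χ` a Dirichlet character mod `p^a`.
Then there is an integer `L` (independent of `x`) such that for all integers `x`,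
`χ(1 + p^b x) = exp(2πi · L · (2 p^b x − p^{2b} x²) / p^a)`. -/
theorem stmt0 (p : ℕ) (hp : p.Prime) (hp2 : p ≠ 2) (a : ℕ) (ha : 1 ≤ a)
    (b : ℕ) (hb : (b : ℤ) = ⌈(a : ℚ) / 3⌉)
    (χ : DirichletCharacter ℂ (p ^ a)) :
    ∃ L : ℤ, ∀ x : ℤ,
      χ ((1 + (p : ℤ) ^ b * x : ℤ) : ZMod (p ^ a)) =
        Complex.exp (2 * (Real.pi : ℂ) * Complex.I * (L : ℂ) *
          (2 * (p : ℂ) ^ b * (x : ℂ) - (p : ℂ) ^ (2 * b) * (x : ℂ) ^ 2) / (p : ℂ) ^ a) :=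
  stmt0_general p hp hp2 a b hb χ
end

section
/- Let a > 3 be an integer, let b = ⌈a/3⌉, and let χ be a Dirichlet character modulo 2^a. Then there exists an integer L₁, depending only on χ and b (independent of x), such that for every integer x, χ(1 + 2^b x) = exp(2πi · L₁ · (2^b x − 2^{2b−1} x²) / 2^a) (equivalently, χ(1 + 2^b x) = exp(2πi L₁ x / 2^{a−b} − πi L₁ x² / 2^{a−2b})). -/
/-!
Put `a = b + m`. Modulo `2 ^ m`, the truncated logarithm `x ↦ x - 2 ^ (b - 1) * x ^ 2` carries the
law `x + y + 2 ^ b * x * y`, which is multiplication of the principal units `1 + 2 ^ b * x`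
modulo `2 ^ a`, to addition: the defect `-2 ^ (2b) xy(x + y) - 2 ^ (3b - 1) x²y²` vanishes because
`m ≤ 2b`, i.e. `a ≤ 3b`. It is a bijection of `ZMod (2 ^ m)` because `1 - 2 ^ (b - 1) (u + v)` is a
unit once `b ≥ 2`. So `x ↦ χ (1 + 2 ^ b * x)` is an additive character of `ZMod (2 ^ m)` evaluated
at `x - 2 ^ (b - 1) * x ^ 2`, that is `exp (2πi L₁ (x - 2 ^ (b - 1) * x ^ 2) / 2 ^ m)`.
-/

open Complex

lemma AddChar.exists_apply_intCast_eq_exp {N : ℕ} [NeZero N] (ψ : AddChar (ZMod N) ℂ) :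
    ∃ L : ℤ, ∀ j : ℤ, ψ j = exp (2 * Real.pi * I * L * j / N) := by
  obtain ⟨x, rfl⟩ := AddChar.zmodAddEquiv.surjective ψ
  obtain ⟨L, rfl⟩ := ZMod.intCast_surjective x
  refine ⟨L, fun j => ?_⟩
  change ((AddChar.zmod N L j : Circle) : ℂ) = _
  rw [AddChar.zmod_intCast, Circle.coe_exp]
  push_cast
  ring_nf

namespace ZMod

variable {b m : ℕ}

lemma two_pow_eq_zero_of_le {k : ℕ} (h : m ≤ k) : (2 : ZMod (2 ^ m)) ^ k = 0 :=
  pow_eq_zero_of_le h (by exact_mod_cast natCast_self (2 ^ m))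

lemma isNilpotent_two_mul (w : ZMod (2 ^ m)) : IsNilpotent (2 * w) :=
  ⟨m, by rw [mul_pow, two_pow_eq_zero_of_le le_rfl, zero_mul]⟩

lemma injective_sub_two_mul_mul_sq (c : ZMod (2 ^ m)) :
    Function.Injective fun t : ZMod (2 ^ m) => t - 2 * c * t ^ 2 := by
  intro u v huv
  have h : (u - v) * (1 - 2 * (c * (u + v))) = 0 := by linear_combination huv
  exact sub_eq_zero.mp ((isNilpotent_two_mul _).isUnit_one_sub.mul_left_eq_zero.mp h)

def twoPowMulHom (b m : ℕ) : ZMod (2 ^ m) →+ ZMod (2 ^ (b + m)) :=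
  lift (2 ^ m) ⟨(AddMonoidHom.mulLeft (2 ^ b)).comp (Int.castAddHom _), by
    simp only [AddMonoidHom.coe_comp, Function.comp_apply, Int.coe_castAddHom,
      AddMonoidHom.coe_mulLeft]
    push_cast
    rw [← pow_add]
    exact_mod_cast natCast_self (2 ^ (b + m))⟩

@[simp]
lemma twoPowMulHom_intCast (x : ℤ) : twoPowMulHom b m x = 2 ^ b * x :=
  lift_coe _ _ _

lemma one_add_twoPowMulHom_mul (x y : ZMod (2 ^ m)) :
    (1 + twoPowMulHom b m x) * (1 + twoPowMulHom b m y) =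
      1 + twoPowMulHom b m (x + y + 2 ^ b * x * y) := by
  obtain ⟨x, rfl⟩ := intCast_surjective x
  obtain ⟨y, rfl⟩ := intCast_surjective y
  rw [← Int.cast_ofNat, ← Int.cast_pow, ← Int.cast_mul, ← Int.cast_mul, ← Int.cast_add,
    ← Int.cast_add]
  simp only [twoPowMulHom_intCast]
  push_cast
  ring

end ZMod

/-- The first two terms of `log (1 + 2 ^ b * x) / 2 ^ b`. -/
def truncLog {R : Type*} [CommRing R] (b : ℕ) (x : R) : R := x - 2 ^ (b - 1) * x ^ 2

@[simp, norm_cast]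
lemma Int.cast_truncLog {R : Type*} [CommRing R] (b : ℕ) (x : ℤ) :
    ((truncLog b x : ℤ) : R) = truncLog b (x : R) := by
  simp [truncLog]

section TruncLog

variable {b m : ℕ}

@[simp]
lemma truncLog_zero {R : Type*} [CommRing R] : truncLog b (0 : R) = 0 := by
  simp [truncLog]

lemma truncLog_add_add_two_pow_mul (hb : 1 ≤ b) (hm : m ≤ 2 * b) (x y : ZMod (2 ^ m)) :
    truncLog b (x + y + 2 ^ b * x * y) = truncLog b x + truncLog b y := by
  obtain ⟨k, rfl⟩ : ∃ k, b = k + 1 := ⟨b - 1, by omega⟩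
  have h₂ : (2 : ZMod (2 ^ m)) ^ (2 * k + 2) = 0 := ZMod.two_pow_eq_zero_of_le (by omega)
  have h₃ : (2 : ZMod (2 ^ m)) ^ (3 * k + 2) = 0 := ZMod.two_pow_eq_zero_of_le (by omega)
  simp only [truncLog, Nat.add_sub_cancel]
  linear_combination (-(x * y * (x + y))) * h₂ - (x * y) ^ 2 * h₃

lemma bijective_truncLog (hb : 2 ≤ b) : Function.Bijective (truncLog b : ZMod (2 ^ m) → _) := by
  refine Finite.injective_iff_bijective.mp ?_
  convert ZMod.injective_sub_two_mul_mul_sq (2 ^ (b - 2) : ZMod (2 ^ m)) using 2 with t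
  rw [truncLog, ← pow_succ', show b - 2 + 1 = b - 1 by omega]

variable (m) in
noncomputable def truncLogEquiv (hb : 2 ≤ b) : ZMod (2 ^ m) ≃ ZMod (2 ^ m) :=
  Equiv.ofBijective _ (bijective_truncLog hb)

@[simp]
lemma truncLogEquiv_apply (hb : 2 ≤ b) (x : ZMod (2 ^ m)) : truncLogEquiv m hb x = truncLog b x :=
  rfl

end TruncLog

namespace DirichletCharacter

variable {b m : ℕ}

noncomputable def truncLogAddChar (hb : 2 ≤ b) (hm : m ≤ 2 * b)
    (χ : DirichletCharacter ℂ (2 ^ (b + m))) : AddChar (ZMod (2 ^ m)) ℂ where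
  toFun u := χ (1 + ZMod.twoPowMulHom b m ((truncLogEquiv m hb).symm u))
  map_zero_eq_one' := by
    have h : (truncLogEquiv m hb).symm 0 = 0 :=
      (truncLogEquiv m hb).symm_apply_eq.mpr truncLog_zero.symm
    rw [h, map_zero, add_zero, map_one]
  map_add_eq_mul' u v := by
    set e := truncLogEquiv m hb
    obtain ⟨x, rfl⟩ := e.surjective u
    obtain ⟨y, rfl⟩ := e.surjective v
    have h : e.symm (e x + e y) = x + y + 2 ^ b * x * y := by
      rw [e.symm_apply_eq, truncLogEquiv_apply, truncLogEquiv_apply, truncLogEquiv_apply,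
        truncLog_add_add_two_pow_mul (by omega) hm]
    rw [h, e.symm_apply_apply, e.symm_apply_apply, ← map_mul, ZMod.one_add_twoPowMulHom_mul]

lemma truncLogAddChar_truncLog (hb : 2 ≤ b) (hm : m ≤ 2 * b)
    (χ : DirichletCharacter ℂ (2 ^ (b + m))) (x : ZMod (2 ^ m)) :
    truncLogAddChar hb hm χ (truncLog b x) = χ (1 + ZMod.twoPowMulHom b m x) := by
  change χ (1 + _) = _
  rw [← truncLogEquiv_apply hb, Equiv.symm_apply_apply]

lemma exists_apply_one_add_two_pow_mul_eq_exp (hb : 2 ≤ b) (hm : m ≤ 2 * b)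
    (χ : DirichletCharacter ℂ (2 ^ (b + m))) :
    ∃ L₁ : ℤ, ∀ x : ℤ,
      χ ((1 + 2 ^ b * x : ℤ) : ZMod (2 ^ (b + m))) =
        exp (2 * (Real.pi : ℂ) * I * (L₁ : ℂ) *
          ((2 : ℂ) ^ b * (x : ℂ) - (2 : ℂ) ^ (2 * b - 1) * (x : ℂ) ^ 2) / (2 : ℂ) ^ (b + m)) := by
  obtain ⟨L, hL⟩ := (truncLogAddChar hb hm χ).exists_apply_intCast_eq_exp
  refine ⟨L, fun x => ?_⟩
  have h := hL (truncLog b x)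
  rw [Int.cast_truncLog, truncLogAddChar_truncLog, ZMod.twoPowMulHom_intCast] at h
  push_cast
  rw [h]
  congr 1
  obtain ⟨k, rfl⟩ : ∃ k, b = k + 1 := ⟨b - 1, by omega⟩
  rw [show 2 * (k + 1) - 1 = (k + 1) + k by omega]
  simp only [truncLog, Nat.add_sub_cancel]
  push_cast
  field_simp
  ring

end DirichletCharacter

/-- **Postnikov character formula, `p = 2`, `a > 3` case.**
Let `a > 3`, `b = ⌈a/3⌉`, and `χ` a Dirichlet character mod `2^a`. Then there is an
integer `L₁` (independent of `x`) such that for all integers `x`,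
`χ(1 + 2^b x) = exp(2πi · L₁ · (2^b x − 2^{2b−1} x²) / 2^a)`. -/
theorem stmt1 (a : ℕ) (ha : 3 < a) (b : ℕ) (hb : (b : ℤ) = ⌈(a : ℚ) / 3⌉)
    (χ : DirichletCharacter ℂ (2 ^ a)) :
    ∃ L₁ : ℤ, ∀ x : ℤ,
      χ ((1 + 2 ^ b * x : ℤ) : ZMod (2 ^ a)) =
        Complex.exp (2 * (Real.pi : ℂ) * Complex.I * (L₁ : ℂ) *
          ((2 : ℂ) ^ b * (x : ℂ) - (2 : ℂ) ^ (2 * b - 1) * (x : ℂ) ^ 2) / (2 : ℂ) ^ a) := by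
  have hle : (a : ℚ) / 3 ≤ b := by exact_mod_cast hb ▸ Int.le_ceil _
  have hlt : (b : ℚ) < a / 3 + 1 := by exact_mod_cast hb ▸ Int.ceil_lt_add_one _
  have h₁ : a ≤ 3 * b := by exact_mod_cast (by linarith : (a : ℚ) ≤ 3 * b)
  have h₂ : 3 * b < a + 3 := by exact_mod_cast (by linarith : (3 * b : ℚ) < a + 3)
  obtain ⟨m, rfl⟩ : ∃ m, a = b + m := ⟨a - b, by omega⟩
  exact DirichletCharacter.exists_apply_one_add_two_pow_mul_eq_exp (by omega) (by omega) χ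
end

section
/- Let p be an odd prime, let a ≥ 1 be an integer, and let b = ⌈a/3⌉. Then the map ψ sending the residue class of 1 + p^b x in (ℤ/p^aℤ)ˣ to exp(2πi (2 p^b x − p^{2b} x²) / p^a) ∈ ℂˣ is well defined on the subgroup H = {u ∈ (ℤ/p^aℤ)ˣ : u ≡ 1 (mod p^b)} (i.e., if x ≡ x′ (mod p^{a−b}) then the two values agree) and is a group homomorphism: ψ((1+p^b x)(1+p^b y)) = ψ(1+p^b x)·ψ(1+p^b y) for all integers x, y. -/
/-! The exponent `2 m x - m² x²`, with `m = p^b`, is the truncation of `2 log (1 + m x)`; hence it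
turns products `(1 + m x)(1 + m y)` into sums up to an error divisible by `m³`, and `p^a ∣ p^{3b}`
because `b = ⌈a/3⌉`. Changing `x` by a multiple of `p^{a-b}` changes the exponent by a multiple of
`m p^{a-b} = p^a`. -/

open Complex
open scoped Real

theorem Complex.exp_two_pi_I_mul_div_eq_of_dvd {n u v : ℤ} (h : n ∣ u - v) :
    exp (2 * π * I * u / n) = exp (2 * π * I * v / n) := by
  obtain ⟨k, hk⟩ := h
  rcases eq_or_ne n 0 with rfl | hn
  · rw [show u = v by simpa [sub_eq_zero] using hk]
  refine exp_eq_exp_iff_exists_int.mpr ⟨k, ?_⟩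
  rw [show u = v + n * k by linarith]
  field_simp
  push_cast
  ring

section Phase

variable {R : Type*} [CommRing R]

def truncatedLogPhase (m x : R) : R := 2 * m * x - m ^ 2 * x ^ 2

theorem truncatedLogPhase_sub_truncatedLogPhase (m x x' : R) :
    truncatedLogPhase m x - truncatedLogPhase m x' = m * (x - x') * (2 - m * (x + x')) := by
  unfold truncatedLogPhase; ring

theorem mul_dvd_truncatedLogPhase_sub {m n x x' : R} (h : n ∣ x - x') :
    m * n ∣ truncatedLogPhase m x - truncatedLogPhase m x' := by
  rw [truncatedLogPhase_sub_truncatedLogPhase]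
  exact Dvd.dvd.mul_right (mul_dvd_mul_left m h) _

theorem truncatedLogPhase_add_add_mul (m x y : R) :
    truncatedLogPhase m (x + y + m * x * y) =
      truncatedLogPhase m x + truncatedLogPhase m y - m ^ 3 * (x * y * (2 * (x + y) + m * x * y)) := by
  unfold truncatedLogPhase; ring

theorem pow_three_dvd_truncatedLogPhase_add_add_mul_sub (m x y : R) :
    m ^ 3 ∣ truncatedLogPhase m (x + y + m * x * y) - (truncatedLogPhase m x + truncatedLogPhase m y) :=
  ⟨-(x * y * (2 * (x + y) + m * x * y)), by rw [truncatedLogPhase_add_add_mul]; ring⟩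

end Phase

theorem stmt5_general (p : ℕ) (a : ℕ)
    (b : ℕ) (hb : (b : ℤ) = ⌈(a : ℚ) / 3⌉)
    (ψ : ℤ → ℂ)
    (hψ : ∀ x : ℤ, ψ x = Complex.exp (2 * (Real.pi : ℂ) * Complex.I *
        (2 * (p : ℂ) ^ b * (x : ℂ) - (p : ℂ) ^ (2 * b) * (x : ℂ) ^ 2) / (p : ℂ) ^ a)) :
    (∀ x x' : ℤ, x ≡ x' [ZMOD ((p : ℤ) ^ (a - b))] → ψ x = ψ x') ∧
    (∀ x y : ℤ, ψ (x + y + (p : ℤ) ^ b * x * y) = ψ x * ψ y) := by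
  have hψ' (x : ℤ) : ψ x = exp (2 * π * I * (truncatedLogPhase ((p : ℤ) ^ b) x : ℤ) /
      ((p : ℤ) ^ a : ℤ)) := by
    rw [hψ, truncatedLogPhase]; push_cast; ring_nf
  have hba : b ≤ a := by
    have : (b : ℤ) ≤ a := hb ▸ Int.ceil_le.mpr (by push_cast; linarith [(a.cast_nonneg : (0 : ℚ) ≤ a)])
    exact_mod_cast this
  have h3b : a ≤ 3 * b := by
    have := hb ▸ Int.le_ceil ((a : ℚ) / 3)
    exact_mod_cast (by push_cast at this; linarith : (a : ℚ) ≤ 3 * b)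
  refine ⟨fun x x' hx => ?_, fun x y => ?_⟩
  · rw [hψ', hψ']
    refine exp_two_pi_I_mul_div_eq_of_dvd ?_
    rw [← Nat.add_sub_cancel' hba, pow_add]
    exact mul_dvd_truncatedLogPhase_sub (Int.ModEq.dvd hx.symm)
  · rw [hψ', hψ', hψ', ← exp_add, ← add_div, ← mul_add, ← Int.cast_add]
    refine exp_two_pi_I_mul_div_eq_of_dvd (dvd_trans ?_ (pow_three_dvd_truncatedLogPhase_add_add_mul_sub _ x y))
    rw [← pow_mul, mul_comm]
    exact pow_dvd_pow _ h3b

/-- **Well-definedness and multiplicativity of the auxiliary character `ψ`.**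
Let `p` be an odd prime, `a ≥ 1`, `b = ⌈a/3⌉`, and let
`ψ(x) = exp(2πi (2 p^b x − p^{2b} x²) / p^a)`.  Then `ψ` is well defined on the
subgroup `H = {u ∈ (ℤ/p^aℤ)ˣ : u ≡ 1 (mod p^b)}`, i.e. `ψ(x) = ψ(x')` whenever
`x ≡ x' (mod p^{a−b})`, and `ψ` is a homomorphism on `H`:
since `(1+p^b x)(1+p^b y) = 1 + p^b (x + y + p^b x y)`, this reads
`ψ(x + y + p^b x y) = ψ(x) ψ(y)` for all integers `x, y`. -/
theorem stmt5 (p : ℕ) (hp : p.Prime) (hp2 : p ≠ 2) (a : ℕ) (ha : 1 ≤ a)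
    (b : ℕ) (hb : (b : ℤ) = ⌈(a : ℚ) / 3⌉)
    (ψ : ℤ → ℂ)
    (hψ : ∀ x : ℤ, ψ x = Complex.exp (2 * (Real.pi : ℂ) * Complex.I *
        (2 * (p : ℂ) ^ b * (x : ℂ) - (p : ℂ) ^ (2 * b) * (x : ℂ) ^ 2) / (p : ℂ) ^ a)) :
    (∀ x x' : ℤ, x ≡ x' [ZMOD ((p : ℤ) ^ (a - b))] → ψ x = ψ x') ∧
    (∀ x y : ℤ, ψ (x + y + (p : ℤ) ^ b * x * y) = ψ x * ψ y) :=
  stmt5_general p a b hb ψ hψ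
end

section
/- Let p be an odd prime, let a ≥ 1, let b = ⌈a/3⌉, and let χ be a Dirichlet character modulo p^a. Suppose B is an integer with χ(1 + p^b) = exp(2πi B / p^{a−b}), and suppose L is an integer satisfying L·(2 − p^b) ≡ B (mod p^{a−b}). Then for every integer x, χ(1 + p^b x) = exp(2πi L (2 p^b x − p^{2b} x²) / p^a). -/
/-!
Since `p` is odd, the units of `ZMod (p ^ a)` that are `≡ 1 mod p ^ b` form a cyclic group of
order `p ^ (a - b)` generated by `1 + p ^ b`, so `1 + p ^ b x = (1 + p ^ b) ^ n` for some `n`.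
The polynomial `quadLog y = 2 y - y ^ 2` is the truncation of `2 log (1 + y)`; it turns products
of elements `1 + y` with `p ^ b ∣ y` into sums modulo `p ^ (3 b)`, which is `0` in `ZMod (p ^ a)`
because `a ≤ 3 ⌈a / 3⌉`. Hence `1 + p ^ b x ↦ exp (2 π i L quadLog (p ^ b x) / p ^ a)` is a
character of that cyclic group, and the congruence defining `L` says exactly that it agrees with
`χ` on the generator `1 + p ^ b`.
-/

section QuadLog

variable {R : Type*} [CommRing R]

def quadLog (y : R) : R := 2 * y - y ^ 2

theorem quadLog_add_add_mul {d y z : R} (hd : d ^ 3 = 0) (hy : d ∣ y) (hz : d ∣ z) :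
    quadLog (y + z + y * z) = quadLog y + quadLog z := by
  obtain ⟨y, rfl⟩ := hy
  obtain ⟨z, rfl⟩ := hz
  unfold quadLog
  linear_combination (-(2 * (y + z) * y * z) - d * y ^ 2 * z ^ 2) * hd

theorem quadLog_one_add_pow_sub_one {y : R} (hy : y ^ 3 = 0) (n : ℕ) :
    quadLog ((1 + y) ^ n - 1) = n * quadLog y := by
  induction n with
  | zero => simp [quadLog]
  | succ n ih =>
    have hdvd : y ∣ (1 + y) ^ n - 1 := by simpa using sub_one_dvd_pow_sub_one (1 + y) n
    calc quadLog ((1 + y) ^ (n + 1) - 1)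
        = quadLog (((1 + y) ^ n - 1) + y + ((1 + y) ^ n - 1) * y) := by ring_nf
      _ = (n + 1 : ℕ) * quadLog y := by
        rw [quadLog_add_add_mul hy hdvd dvd_rfl, ih]; push_cast; ring

end QuadLog

namespace ZMod

variable {p a b : ℕ}

theorem pow_mul_intCast_eq_of_modEq (hba : b ≤ a) {s t : ℤ}
    (h : s ≡ t [ZMOD (p : ℤ) ^ (a - b)]) :
    (p : ZMod (p ^ a)) ^ b * s = p ^ b * t := by
  have h' := h.mul_left' (c := (p : ℤ) ^ b)
  rw [← pow_add, Nat.add_sub_cancel' hba] at h'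
  exact_mod_cast (intCast_eq_intCast_iff _ _ (p ^ a)).mpr (by exact_mod_cast h')

theorem isUnit_one_add_pow_mul (hb : 1 ≤ b) (y : ZMod (p ^ a)) :
    IsUnit (1 + (p : ZMod (p ^ a)) ^ b * y) := by
  refine IsNilpotent.isUnit_one_add ⟨a, ?_⟩
  rw [mul_pow, ← pow_mul, natCast_pow_eq_zero_of_le p (by nlinarith), zero_mul]

theorem mem_ker_unitsMap_of_val_eq_one_add (hba : b ≤ a) {u : (ZMod (p ^ a))ˣ}
    {y : ZMod (p ^ a)} (hu : (u : ZMod (p ^ a)) = 1 + p ^ b * y) :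
    u ∈ (unitsMap (pow_dvd_pow p hba)).ker := by
  rw [MonoidHom.mem_ker, Units.ext_iff, unitsMap_def, Units.coe_map, hu, MonoidHom.coe_coe,
    map_add, map_mul, map_pow, map_one, map_natCast, natCast_pow_eq_zero_of_le p le_rfl, zero_mul,
    add_zero, Units.val_one]

theorem card_ker_unitsMap_prime_pow (hp : p.Prime) (hb : 1 ≤ b) (hba : b ≤ a) :
    Nat.card (unitsMap (pow_dvd_pow p hba)).ker = p ^ (a - b) := by
  have : NeZero (p ^ a) := ⟨pow_ne_zero a hp.ne_zero⟩
  have : NeZero (p ^ b) := ⟨pow_ne_zero b hp.ne_zero⟩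
  have h := (unitsMap (pow_dvd_pow p hba)).ker.card_mul_index
  rw [Subgroup.index_ker, MonoidHom.range_eq_top.mpr (unitsMap_surjective _), Subgroup.card_top,
    Nat.card_eq_fintype_card (α := (ZMod (p ^ b))ˣ),
    Nat.card_eq_fintype_card (α := (ZMod (p ^ a))ˣ),
    card_units_eq_totient, card_units_eq_totient, Nat.totient_prime_pow hp (by omega),
    Nat.totient_prime_pow hp (by omega), show a - 1 = (a - b) + (b - 1) by omega, pow_add,
    mul_assoc] at h
  exact Nat.eq_of_mul_eq_mul_right (Nat.mul_pos (pow_pos hp.pos _) (Nat.sub_pos_of_lt hp.one_lt)) h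

theorem orderOf_one_add_prime_pow (hp : p.Prime) (hp2 : p ≠ 2) (hb : 1 ≤ b) (hba : b ≤ a) :
    orderOf (1 + p ^ b : ZMod (p ^ a)) = p ^ (a - b) := by
  obtain ⟨k, rfl⟩ : ∃ k, a = k + b := ⟨a - b, by omega⟩
  have hp3 : 3 ≤ p := by have := hp.two_le; omega
  have hp1 : ¬ (p : ℤ) ∣ 1 := by rw [Int.natCast_dvd_ofNat]; exact hp.not_dvd_one
  simpa using orderOf_one_add_mul_prime_pow hp b (by omega) (by nlinarith) 1 hp1 k

theorem ker_unitsMap_prime_pow_eq_zpowers (hp : p.Prime) (hp2 : p ≠ 2) (hb : 1 ≤ b)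
    (hba : b ≤ a) {u : (ZMod (p ^ a))ˣ} (hu : (u : ZMod (p ^ a)) = 1 + p ^ b) :
    (unitsMap (pow_dvd_pow p hba)).ker = Subgroup.zpowers u := by
  have : NeZero (p ^ a) := ⟨pow_ne_zero a hp.ne_zero⟩
  refine (Subgroup.eq_of_le_of_card_ge ?_ ?_).symm
  · exact Subgroup.zpowers_le.mpr (mem_ker_unitsMap_of_val_eq_one_add hba (y := 1) (by simp [hu]))
  · rw [Nat.card_zpowers, ← orderOf_units, hu, orderOf_one_add_prime_pow hp hp2 hb hba,
      card_ker_unitsMap_prime_pow hp hb hba]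

theorem exists_pow_eq_one_add_prime_pow_mul (hp : p.Prime) (hp2 : p ≠ 2) (hb : 1 ≤ b)
    (hba : b ≤ a) (y : ZMod (p ^ a)) :
    ∃ n : ℕ, 1 + (p : ZMod (p ^ a)) ^ b * y = (1 + p ^ b) ^ n := by
  have : NeZero (p ^ a) := ⟨pow_ne_zero a hp.ne_zero⟩
  have hv := isUnit_one_add_pow_mul hb y
  have hker := ker_unitsMap_prime_pow_eq_zpowers hp hp2 hb hba
    (u := (isUnit_one_add_pow_mul hb 1).unit) (by simp)
  have hmem := mem_ker_unitsMap_of_val_eq_one_add hba hv.unit_spec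
  rw [hker, ← mem_powers_iff_mem_zpowers] at hmem
  obtain ⟨n, hn⟩ := hmem
  exact ⟨n, by simpa using congrArg Units.val hn.symm⟩

end ZMod

theorem bounds_of_eq_ceil_div_three {a b : ℕ} (ha : 1 ≤ a)
    (hb : (b : ℤ) = ⌈(a : ℚ) / 3⌉) :
    1 ≤ b ∧ b ≤ a ∧ a ≤ 3 * b := by
  obtain ⟨hlt, hle⟩ := Int.ceil_eq_iff.mp hb.symm
  push_cast at hlt hle
  have h1 : 3 * b < a + 3 := by exact_mod_cast (by linarith : (3 * b : ℚ) < a + 3)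
  have h2 : a ≤ 3 * b := by exact_mod_cast (by linarith : (a : ℚ) ≤ 3 * b)
  omega

theorem nsmul_mul_pow_eq_mul_quadLog {p a b n : ℕ} {B L : ℤ} {y : ZMod (p ^ a)}
    (ha3b : a ≤ 3 * b) (hba : b ≤ a) (hL : L * (2 - (p : ℤ) ^ b) ≡ B [ZMOD (p : ℤ) ^ (a - b)])
    (hn : 1 + (p : ZMod (p ^ a)) ^ b * y = (1 + p ^ b) ^ n) :
    n • ((B : ZMod (p ^ a)) * p ^ b) = L * quadLog ((p : ZMod (p ^ a)) ^ b * y) := by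
  have hcube : ((p : ZMod (p ^ a)) ^ b) ^ 3 = 0 := by
    rw [← pow_mul, ZMod.natCast_pow_eq_zero_of_le p (by omega)]
  have hgen : (L : ZMod (p ^ a)) * quadLog ((p : ZMod (p ^ a)) ^ b) = B * p ^ b := by
    have h := ZMod.pow_mul_intCast_eq_of_modEq hba hL
    push_cast at h
    unfold quadLog
    linear_combination h
  rw [← add_sub_cancel_left 1 ((p : ZMod (p ^ a)) ^ b * y), hn,
    quadLog_one_add_pow_sub_one hcube, nsmul_eq_mul, ← hgen]
  ring

/-- **Determination of the Postnikov exponent `L`.**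
Let `p` be an odd prime, `a ≥ 1`, `b = ⌈a/3⌉`, `χ` a Dirichlet character mod `p^a`.
If `B` is an integer with `χ(1 + p^b) = exp(2πi B / p^{a−b})` and `L` satisfies
`L (2 − p^b) ≡ B (mod p^{a−b})`, then for every integer `x`,
`χ(1 + p^b x) = exp(2πi L (2 p^b x − p^{2b} x²) / p^a)`. -/
theorem stmt7 (p : ℕ) (hp : p.Prime) (hp2 : p ≠ 2) (a : ℕ) (ha : 1 ≤ a)
    (b : ℕ) (hb : (b : ℤ) = ⌈(a : ℚ) / 3⌉)
    (χ : DirichletCharacter ℂ (p ^ a)) (B L : ℤ)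
    (hB : χ ((1 + (p : ℤ) ^ b : ℤ) : ZMod (p ^ a)) =
      Complex.exp (2 * (Real.pi : ℂ) * Complex.I * (B : ℂ) / (p : ℂ) ^ (a - b)))
    (hL : L * (2 - (p : ℤ) ^ b) ≡ B [ZMOD ((p : ℤ) ^ (a - b))]) :
    ∀ x : ℤ, χ ((1 + (p : ℤ) ^ b * x : ℤ) : ZMod (p ^ a)) =
      Complex.exp (2 * (Real.pi : ℂ) * Complex.I * (L : ℂ) *
        (2 * (p : ℂ) ^ b * (x : ℂ) - (p : ℂ) ^ (2 * b) * (x : ℂ) ^ 2) / (p : ℂ) ^ a) := by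
  intro x
  obtain ⟨hb1, hba, ha3b⟩ := bounds_of_eq_ceil_div_three ha hb
  have : NeZero (p ^ a) := ⟨pow_ne_zero a hp.ne_zero⟩
  obtain ⟨n, hn⟩ := ZMod.exists_pow_eq_one_add_prime_pow_mul hp hp2 hb1 hba (x : ZMod (p ^ a))
  have hphase := nsmul_mul_pow_eq_mul_quadLog ha3b hba hL hn
  have hpa : (p ^ a : ℂ) = (p : ℂ) ^ b * (p : ℂ) ^ (a - b) := by
    rw [← pow_add, Nat.add_sub_cancel' hba]
  have hp0 : (p : ℂ) ≠ 0 := by exact_mod_cast hp.ne_zero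
  calc χ ((1 + (p : ℤ) ^ b * x : ℤ) : ZMod (p ^ a))
      = χ ((1 + (p : ℤ) ^ b : ℤ) : ZMod (p ^ a)) ^ n := by push_cast; rw [hn, map_pow]
    _ = ZMod.stdAddChar ((B * p ^ b : ℤ) : ZMod (p ^ a)) ^ n := by
      rw [hB, ZMod.stdAddChar_coe]; push_cast; rw [hpa]; field_simp
    _ = ZMod.stdAddChar ((L * (2 * (p ^ b * x) - (p ^ b * x) ^ 2) : ℤ) : ZMod (p ^ a)) := by
      rw [← AddChar.map_nsmul_eq_pow]; push_cast; rw [hphase]; rfl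
    _ = _ := by rw [ZMod.stdAddChar_coe]; push_cast; ring_nf
end

section
/- Let a ≥ 4 be an integer, let b = ⌈a/3⌉, and define F(x) = 2^b x − 2^{2b−1} x². Then for all integers x and y, F(x + y + 2^b x y) ≡ F(x) + F(y) (mod 2^a). -/
/-!
With `x ⊕ y = x + y + 2^b x y`, expanding gives
`F x + F y - F (x ⊕ y) = 2^(3b) x y (x + y) + 2^(4b-1) x² y²`,
and both exponents are at least `a` because `a ≤ 3b ≤ 4b - 1`.
-/

lemma le_three_mul_of_natCast_eq_ceil_div_three {a b : ℕ} (hb : (b : ℤ) = ⌈(a : ℚ) / 3⌉) :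
    a ≤ 3 * b := by
  have h : (a : ℚ) / 3 ≤ b := by exact_mod_cast hb ▸ Int.le_ceil ((a : ℚ) / 3)
  have : (a : ℚ) ≤ 3 * b := by linarith
  exact_mod_cast this

lemma add_sub_apply_eq {b : ℕ} (hb : 1 ≤ b) {F : ℤ → ℤ}
    (hF : ∀ x : ℤ, F x = 2 ^ b * x - 2 ^ (2 * b - 1) * x ^ 2) (x y : ℤ) :
    F x + F y - F (x + y + 2 ^ b * x * y) =
      2 ^ (3 * b) * (x * y * (x + y)) + 2 ^ (4 * b - 1) * (x * y) ^ 2 := by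
  obtain ⟨c, rfl⟩ : ∃ c, b = c + 1 := ⟨b - 1, by omega⟩
  have h2 : 2 * (c + 1) - 1 = 2 * c + 1 := by omega
  have h4 : 4 * (c + 1) - 1 = 4 * c + 3 := by omega
  simp only [hF, h2, h4]
  ring

lemma modEq_of_le_three_mul {a b : ℕ} (hab : a ≤ 3 * b) {F : ℤ → ℤ}
    (hF : ∀ x : ℤ, F x = 2 ^ b * x - 2 ^ (2 * b - 1) * x ^ 2) (x y : ℤ) :
    F (x + y + 2 ^ b * x * y) ≡ F x + F y [ZMOD 2 ^ a] := by
  rcases Nat.eq_zero_or_pos a with rfl | ha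
  · exact Int.modEq_one
  refine Int.modEq_iff_dvd.mpr ?_
  rw [add_sub_apply_eq (by omega) hF]
  exact dvd_add (dvd_mul_of_dvd_left (pow_dvd_pow 2 hab) _)
    (dvd_mul_of_dvd_left (pow_dvd_pow 2 (by omega)) _)

theorem stmt8_general (a : ℕ) (b : ℕ) (hb : (b : ℤ) = ⌈(a : ℚ) / 3⌉)
    (F : ℤ → ℤ) (hF : ∀ x : ℤ, F x = 2 ^ b * x - 2 ^ (2 * b - 1) * x ^ 2) (x y : ℤ) :
    F (x + y + 2 ^ b * x * y) ≡ F x + F y [ZMOD ((2 : ℤ) ^ a)] :=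
  modEq_of_le_three_mul (le_three_mul_of_natCast_eq_ceil_div_three hb) hF x y

/-- **Key congruence for `F(x) = 2^b x − 2^{2b−1} x²`.**
Let `a ≥ 4`, `b = ⌈a/3⌉`. Then for all integers `x, y`,
`F(x + y + 2^b x y) ≡ F(x) + F(y) (mod 2^a)`. -/
theorem stmt8 (a : ℕ) (ha : 4 ≤ a) (b : ℕ) (hb : (b : ℤ) = ⌈(a : ℚ) / 3⌉)
    (F : ℤ → ℤ) (hF : ∀ x : ℤ, F x = 2 ^ b * x - 2 ^ (2 * b - 1) * x ^ 2) (x y : ℤ) :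
    F (x + y + 2 ^ b * x * y) ≡ F x + F y [ZMOD ((2 : ℤ) ^ a)] :=
  stmt8_general a b hb F hF x y
end

section
/- Let q = p₁^{a₁} ⋯ p_h^{a_h} with p₁, …, p_h distinct primes and a_j ≥ 1, let C = p₁^{⌈a₁/3⌉} ⋯ p_h^{⌈a_h/3⌉}, let χ be a Dirichlet character modulo q, and let w be any integer. Then there exist rational numbers α and β such that for every integer k, χ(1 + w C k) = exp(2πi (α k + β k²)). -/
/-!
Put `t = wC` in `ZMod q`. Since `3⌈a/3⌉ ≥ a`, `q ∣ C³`, so `t³ = 0`, and then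
`(1 + kt)(1 + lt) = (1 + (k + l)t)(1 + klt²)` and `1 + kt² = (1 + t²)ᵏ`. Hence
`ψ k := χ(1 + kt)` satisfies `ψ(k + 1) = ψ k · χ(1 + t) · χ(1 + t²)⁻ᵏ`, where the two character
values are roots of unity `e(r)`, `e(s)` with `e(x) = exp(2πix)`; summing this recursion gives
`ψ k = e((r + s/2)k - (s/2)k²)`.
-/

open Complex

noncomputable def expTwoPiI (x : ℚ) : ℂ := exp (2 * Real.pi * I * x)

lemma expTwoPiI_add (x y : ℚ) : expTwoPiI (x + y) = expTwoPiI x * expTwoPiI y := by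
  simp only [expTwoPiI, Rat.cast_add, mul_add, exp_add]

lemma expTwoPiI_sub (x y : ℚ) : expTwoPiI (x - y) = expTwoPiI x / expTwoPiI y := by
  simp only [expTwoPiI, Rat.cast_sub, mul_sub, exp_sub]

lemma expTwoPiI_ne_zero (x : ℚ) : expTwoPiI x ≠ 0 := exp_ne_zero _

lemma eq_expTwoPiI_of_succ {ψ : ℤ → ℂ} (α β : ℚ) (h0 : ψ 0 = 1)
    (hsucc : ∀ k : ℤ, ψ (k + 1) = ψ k * expTwoPiI (α + β * (2 * k + 1))) (k : ℤ) :
    ψ k = expTwoPiI (α * k + β * k ^ 2) := by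
  induction k using Int.induction_on with
  | zero => simp [h0, expTwoPiI]
  | succ k ih =>
    rw [hsucc, ih, ← expTwoPiI_add]
    congr 1
    push_cast
    ring
  | pred k ih =>
    have h := hsucc (-k - 1)
    rw [sub_add_cancel, ih, ← div_eq_iff (expTwoPiI_ne_zero _), ← expTwoPiI_sub] at h
    rw [← h]
    congr 1
    push_cast
    ring

lemma MulChar.exists_apply_eq_expTwoPiI {R : Type*} [CommRing R] [Fintype Rˣ]
    (χ : MulChar R ℂ) {x : R} (hx : IsUnit x) : ∃ r : ℚ, χ x = expTwoPiI r := by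
  obtain ⟨u, rfl⟩ := hx
  obtain ⟨i, -, hi⟩ := (Complex.mem_rootsOfUnity _ _).mp (χ.apply_mem_rootsOfUnity u)
  refine ⟨i / Fintype.card Rˣ, ?_⟩
  rw [← MulChar.coe_equivToUnitHom, ← hi, expTwoPiI]
  push_cast
  rfl

lemma MulChar.exists_apply_one_add_intCast_mul_eq_expTwoPiI {R : Type*} [CommRing R]
    [Fintype Rˣ] (χ : MulChar R ℂ) {t : R} (ht : t ^ 3 = 0) :
    ∃ α β : ℚ, ∀ k : ℤ, χ (1 + k * t) = expTwoPiI (α * k + β * k ^ 2) := by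
  have hnil : IsNilpotent t := ⟨3, ht⟩
  obtain ⟨r, hr⟩ := χ.exists_apply_eq_expTwoPiI hnil.isUnit_one_add
  obtain ⟨s, hs⟩ := χ.exists_apply_eq_expTwoPiI (hnil.pow_succ 1).isUnit_one_add
  have hsq (k : ℤ) : χ (1 + k * t ^ 2) = expTwoPiI (s * k) := by
    have ht4 : t ^ 4 = 0 := by rw [pow_succ, ht, zero_mul]
    have hsucc (k : ℤ) : χ (1 + (k + 1 : ℤ) * t ^ 2) = χ (1 + k * t ^ 2) * expTwoPiI s := by
      rw [← hs, ← map_mul]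
      congr 1
      push_cast
      linear_combination (-(k : R)) * ht4
    simpa using eq_expTwoPiI_of_succ (ψ := fun k : ℤ ↦ χ (1 + k * t ^ 2)) s 0 (by simp)
      (by simpa using hsucc) k
  refine ⟨r + s / 2, -(s / 2), eq_expTwoPiI_of_succ _ _ (by simp) fun k ↦ ?_⟩
  have hstep : (1 + (k + 1 : ℤ) * t) * (1 + k * t ^ 2) = (1 + k * t) * (1 + t) := by
    push_cast
    linear_combination ((k : R) ^ 2 + k) * ht
  have hrec := congrArg χ hstep
  rw [map_mul, map_mul, hsq, hr, ← eq_div_iff (expTwoPiI_ne_zero _), mul_div_assoc,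
    ← expTwoPiI_sub] at hrec
  rw [hrec]
  congr 2
  ring

lemma Finset.prod_pow_dvd_prod_pow_pow {ι M : Type*} [CommMonoid M] (s : Finset ι) (p : ι → M)
    {a b : ι → ℕ} {n : ℕ} (hab : ∀ j, a j ≤ n * b j) :
    ∏ j ∈ s, p j ^ a j ∣ (∏ j ∈ s, p j ^ b j) ^ n := by
  rw [← Finset.prod_pow]
  exact Finset.prod_dvd_prod_of_dvd _ _ fun j _ ↦ by
    rw [← pow_mul, mul_comm]
    exact pow_dvd_pow _ (hab j)

theorem stmt10_general (h : ℕ) (p a : Fin h → ℕ) (hp : ∀ j, (p j).Prime)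
    (b : Fin h → ℕ) (hb : ∀ j, ((b j : ℤ) = ⌈(a j : ℚ) / 3⌉))
    (q C : ℕ) (hq : q = ∏ j, p j ^ a j) (hC : C = ∏ j, p j ^ b j)
    (χ : DirichletCharacter ℂ q) (w : ℤ) :
    ∃ α β : ℚ, ∀ k : ℤ,
      χ ((1 + w * (C : ℤ) * k : ℤ) : ZMod q) =
        Complex.exp (2 * (Real.pi : ℂ) * Complex.I * ((α : ℂ) * (k : ℂ) + (β : ℂ) * (k : ℂ) ^ 2)) := by
  have : NeZero q := ⟨hq ▸ Finset.prod_ne_zero_iff.mpr fun j _ ↦ pow_ne_zero _ (hp j).ne_zero⟩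
  have hqC : q ∣ C ^ 3 := hq ▸ hC ▸ Finset.prod_pow_dvd_prod_pow_pow _ p fun j ↦ by
    have hceil := Int.le_ceil ((a j : ℚ) / 3)
    rw [← hb j, Int.cast_natCast] at hceil
    exact_mod_cast (by linarith : (a j : ℚ) ≤ 3 * b j)
  have ht : ((w * C : ℤ) : ZMod q) ^ 3 = 0 := by
    rw [← Int.cast_pow, ZMod.intCast_zmod_eq_zero_iff_dvd]
    exact (Int.natCast_dvd_natCast.mpr hqC).trans ⟨w ^ 3, by push_cast; ring⟩
  obtain ⟨α, β, hαβ⟩ := χ.exists_apply_one_add_intCast_mul_eq_expTwoPiI ht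
  refine ⟨α, β, fun k ↦ ?_⟩
  convert hαβ k using 2
  · push_cast
    ring
  · simp [expTwoPiI]

/-- **Character values along the progression `1 + wCℤ` are quadratic exponentials.**
Let `q = p₁^{a₁} ⋯ p_h^{a_h}` with distinct primes `p_j` and `a_j ≥ 1`, let
`C = p₁^{⌈a₁/3⌉} ⋯ p_h^{⌈a_h/3⌉}`, `χ` a Dirichlet character mod `q`, and `w ∈ ℤ`.
Then there are rationals `α, β` with `χ(1 + wCk) = exp(2πi (α k + β k²))` for all `k ∈ ℤ`. -/
theorem stmt10 (h : ℕ) (p a : Fin h → ℕ) (hp : ∀ j, (p j).Prime)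
    (hdist : Function.Injective p) (ha : ∀ j, 1 ≤ a j)
    (b : Fin h → ℕ) (hb : ∀ j, ((b j : ℤ) = ⌈(a j : ℚ) / 3⌉))
    (q C : ℕ) (hq : q = ∏ j, p j ^ a j) (hC : C = ∏ j, p j ^ b j)
    (χ : DirichletCharacter ℂ q) (w : ℤ) :
    ∃ α β : ℚ, ∀ k : ℤ,
      χ ((1 + w * (C : ℤ) * k : ℤ) : ZMod q) =
        Complex.exp (2 * (Real.pi : ℂ) * Complex.I * ((α : ℂ) * (k : ℂ) + (β : ℂ) * (k : ℂ) ^ 2)) :=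
  stmt10_general h p a hp b hb q C hq hC χ w
end

section
/- Let a : ℕ → ℂ and let B ≥ 0 be a real number such that |∑_{n=N₁}^{N₂} a(n)| ≤ B for all integers 1 ≤ N₁ ≤ N₂. Let s ∈ ℂ with 0 < Re(s) ≤ 1 and let M ≥ 1 be an integer. Then the series ∑_{n ≥ M} a(n) n^{−s} converges and |∑_{n ≥ M} a(n) n^{−s}| ≤ B (|s| + 1) / (Re(s) · M^{Re(s)}). -/
/-!
Summation by parts against the partial sums of `a`, which are bounded by `B`, bounds a tail
`∑_{K ≤ n < N} a(n) n^{-s}` by `B (K^{-Re s} + V)`, where `V` is the total variation of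
`n ↦ n^{-s}` on `[K, ∞)`. Writing `y^{-s} - x^{-s} = -s ∫_x^y t^{-s-1} dt` bounds that variation by
`(|s| / Re s) K^{-Re s}`. The tails therefore tend to zero, which gives convergence, and at
`K = M` the bound is `B (1 + |s| / Re s) M^{-Re s}`, which is at most the claimed one when `Re s ≤ 1`.
-/

open Finset Filter Topology

namespace Complex

theorem norm_ofReal_cpow_neg_sub_le {x y : ℝ} (hx : 0 < x) (hxy : x ≤ y) {s : ℂ}
    (hs : 0 < s.re) :
    ‖(y : ℂ) ^ (-s) - (x : ℂ) ^ (-s)‖ ≤ ‖s‖ / s.re * (x ^ (-s.re) - y ^ (-s.re)) := by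
  have h0 : (0 : ℝ) ∉ Set.uIcc x y := by
    rw [Set.uIcc_of_le hxy]; exact fun h ↦ hx.not_ge h.1
  have hs0 : s ≠ 0 := by rintro rfl; simp at hs
  have hcpow : ∫ t in x..y, (t : ℂ) ^ (-s - 1) = (-s)⁻¹ * ((y : ℂ) ^ (-s) - (x : ℂ) ^ (-s)) := by
    rw [integral_cpow (Or.inr ⟨by contrapose! hs0; linear_combination -hs0, h0⟩)]
    simp [div_eq_inv_mul]
  have hrpow : ∫ t in x..y, t ^ (-s.re - 1) = (s.re)⁻¹ * (x ^ (-s.re) - y ^ (-s.re)) := by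
    rw [integral_rpow (Or.inr ⟨by linarith, h0⟩)]
    have := hs.ne'
    simp only [sub_add_cancel]
    field_simp
    ring
  have hnorm : ∀ t ∈ Set.uIcc x y, ‖(t : ℂ) ^ (-s - 1)‖ = t ^ (-s.re - 1) := fun t ht ↦ by
    rw [Set.uIcc_of_le hxy] at ht
    simp [norm_cpow_eq_rpow_re_of_pos (hx.trans_le ht.1)]
  calc ‖(y : ℂ) ^ (-s) - (x : ℂ) ^ (-s)‖ = ‖s‖ * ‖∫ t in x..y, (t : ℂ) ^ (-s - 1)‖ := by
        rw [hcpow, norm_mul, norm_inv, norm_neg, ← mul_assoc, mul_inv_cancel₀ (by simpa), one_mul]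
    _ ≤ ‖s‖ * ∫ t in x..y, t ^ (-s.re - 1) := by
        gcongr
        rw [← intervalIntegral.integral_congr hnorm]
        exact intervalIntegral.norm_integral_le_integral_norm hxy
    _ = ‖s‖ / s.re * (x ^ (-s.re) - y ^ (-s.re)) := by
        rw [hrpow]; ring

end Complex

theorem Finset.norm_sum_Icc_smul_le {𝕜 E : Type*} [NormedField 𝕜] [SeminormedAddCommGroup E]
    [NormedSpace 𝕜 E] (f : ℕ → 𝕜) (g : ℕ → E) {B : ℝ} {m n : ℕ} (hmn : m ≤ n)
    (hg : ∀ k, m ≤ k → k ≤ n → ‖∑ i ∈ Icc m k, g i‖ ≤ B) :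
    ‖∑ i ∈ Icc m n, f i • g i‖ ≤ B * (‖f n‖ + ∑ i ∈ Ico m n, ‖f (i + 1) - f i‖) := by
  set g' : ℕ → E := fun i ↦ if m ≤ i then g i else 0
  have hG : ∀ k, m ≤ k → ∑ i ∈ range (k + 1), g' i = ∑ i ∈ Icc m k, g i := fun k hk ↦ by
    rw [sum_ite, sum_const_zero, add_zero]
    congr 1
    ext i; simp; omega
  have hG0 : ∑ i ∈ range m, g' i = 0 := sum_eq_zero fun i hi ↦ if_neg (by simpa using hi)
  have hparts := sum_Ico_by_parts f g' (Nat.lt_add_one_of_le hmn)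
  rw [Nat.add_sub_cancel, hG0, smul_zero, sub_zero, hG n hmn] at hparts
  have hsum : ∑ i ∈ Icc m n, f i • g i = ∑ i ∈ Ico m (n + 1), f i • g' i :=
    sum_congr (Ico_add_one_right_eq_Icc m n).symm fun i hi ↦ by simp [g', (mem_Icc.1 hi).1]
  rw [hsum, hparts]
  calc _ ≤ ‖f n‖ * B + ∑ i ∈ Ico m n, ‖f (i + 1) - f i‖ * B := by
        refine (norm_sub_le _ _).trans (add_le_add ?_ ((norm_sum_le _ _).trans (sum_le_sum ?_)))
        · exact (norm_smul_le _ _).trans (by gcongr; exact hg n hmn le_rfl)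
        · intro i hi
          have hi := mem_Ico.1 hi
          exact (norm_smul_le _ _).trans (by rw [hG i hi.1]; gcongr; exact hg i hi.1 hi.2.le)
    _ = B * (‖f n‖ + ∑ i ∈ Ico m n, ‖f (i + 1) - f i‖) := by rw [← sum_mul]; ring

theorem cauchySeq_sum_Ico_of_norm_sum_Ico_le {E : Type*} [SeminormedAddCommGroup E]
    {f : ℕ → E} {b : ℕ → ℝ} {m : ℕ} (hb : Tendsto b atTop (𝓝 0))
    (hf : ∀ k n, m ≤ k → ‖∑ i ∈ Ico k n, f i‖ ≤ b k) :
    CauchySeq fun n ↦ ∑ i ∈ Ico m n, f i := by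
  rw [← cauchySeq_shift m]
  refine cauchySeq_of_le_tendsto_0' (fun k ↦ b (k + m)) (fun k n hkn ↦ ?_)
    (hb.comp (tendsto_add_atTop_nat m))
  rw [dist_comm, dist_eq_norm, ← sum_Ico_consecutive f (m.le_add_left k) (by omega),
    add_sub_cancel_left]
  exact hf _ _ (m.le_add_left k)

theorem norm_sum_Ico_mul_natCast_cpow_neg_le {a : ℕ → ℂ} {B : ℝ} {M : ℕ} (hM : 1 ≤ M)
    (ha : ∀ k, M ≤ k → ‖∑ i ∈ Icc M k, a i‖ ≤ B) {s : ℂ} (hs : 0 < s.re) (N : ℕ) :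
    ‖∑ i ∈ Ico M N, a i * (i : ℂ) ^ (-s)‖ ≤ B * (1 + ‖s‖ / s.re) * (M : ℝ) ^ (-s.re) := by
  have hB : 0 ≤ B := (norm_nonneg _).trans (ha M le_rfl)
  obtain hNM | ⟨n, hMn, rfl⟩ : N ≤ M ∨ ∃ n, M ≤ n ∧ N = n + 1 :=
    (le_or_gt N M).imp_right fun h ↦ ⟨N - 1, by omega, by omega⟩
  · rw [Ico_eq_empty_of_le hNM, sum_empty, norm_zero]
    positivity
  have hdiff : ∀ i ∈ Ico M n, ‖((i + 1 : ℕ) : ℂ) ^ (-s) - (i : ℂ) ^ (-s)‖ ≤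
      ‖s‖ / s.re * ((i : ℝ) ^ (-s.re) - ((i + 1 : ℕ) : ℝ) ^ (-s.re)) := fun i hi ↦ by
    have hi : (0 : ℝ) < i := by have := (mem_Ico.1 hi).1; exact_mod_cast (by omega : 0 < i)
    exact_mod_cast Complex.norm_ofReal_cpow_neg_sub_le hi (by simp) hs
  have htelescope : ∑ i ∈ Ico M n, ((i : ℝ) ^ (-s.re) - ((i + 1 : ℕ) : ℝ) ^ (-s.re)) =
      (M : ℝ) ^ (-s.re) - (n : ℝ) ^ (-s.re) := by
    simpa only [sub_neg_eq_add, neg_add_eq_sub] using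
      sum_Ico_sub (fun i : ℕ ↦ -(i : ℝ) ^ (-s.re)) hMn
  have hn : ‖(n : ℂ) ^ (-s)‖ ≤ (M : ℝ) ^ (-s.re) := by
    rw [Complex.norm_natCast_cpow_of_re_ne_zero _ (by simp [hs.ne'])]
    exact Real.rpow_le_rpow_of_nonpos (by positivity) (by exact_mod_cast hMn) (by simp [hs.le])
  calc ‖∑ i ∈ Ico M (n + 1), a i * (i : ℂ) ^ (-s)‖
      = ‖∑ i ∈ Icc M n, (i : ℂ) ^ (-s) • a i‖ := by
        simp_rw [Ico_add_one_right_eq_Icc, smul_eq_mul, mul_comm]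
    _ ≤ B * (‖(n : ℂ) ^ (-s)‖ + ∑ i ∈ Ico M n, ‖((i + 1 : ℕ) : ℂ) ^ (-s) - (i : ℂ) ^ (-s)‖) :=
        norm_sum_Icc_smul_le _ _ hMn fun k hk _ ↦ ha k hk
    _ ≤ B * ((M : ℝ) ^ (-s.re) + ‖s‖ / s.re * ((M : ℝ) ^ (-s.re) - (n : ℝ) ^ (-s.re))) := by
        rw [← htelescope, mul_sum]
        gcongr
        exact hdiff _ ‹_›
    _ ≤ B * (1 + ‖s‖ / s.re) * (M : ℝ) ^ (-s.re) := by
        have : 0 ≤ B * (‖s‖ / s.re) * (n : ℝ) ^ (-s.re) := by positivity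
        nlinarith

theorem stmt11_general (a : ℕ → ℂ) (B : ℝ)
    (h : ∀ N₁ N₂ : ℕ, 1 ≤ N₁ → N₁ ≤ N₂ → ‖∑ n ∈ Finset.Icc N₁ N₂, a n‖ ≤ B)
    (s : ℂ) (hs : 0 < s.re) (hs1 : s.re ≤ 1) (M : ℕ) (hM : 1 ≤ M) :
    ∃ S : ℂ, Filter.Tendsto (fun N : ℕ => ∑ n ∈ Finset.Ico M N, a n * (n : ℂ) ^ (-s))
        Filter.atTop (nhds S) ∧
      ‖S‖ ≤ B * (‖s‖ + 1) / (s.re * (M : ℝ) ^ s.re) := by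
  set C := B * (1 + ‖s‖ / s.re)
  have htail : ∀ K N, M ≤ K → ‖∑ n ∈ Ico K N, a n * (n : ℂ) ^ (-s)‖ ≤ C * (K : ℝ) ^ (-s.re) :=
    fun K N hK ↦ norm_sum_Ico_mul_natCast_cpow_neg_le (hM.trans hK)
      (fun k hk ↦ h K k (hM.trans hK) hk) hs N
  have hdecay : Tendsto (fun K : ℕ ↦ C * (K : ℝ) ^ (-s.re)) atTop (𝓝 0) := by
    simpa using ((tendsto_rpow_neg_atTop hs).comp tendsto_natCast_atTop_atTop).const_mul C
  obtain ⟨S, hS⟩ := cauchySeq_tendsto_of_complete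
    (cauchySeq_sum_Ico_of_norm_sum_Ico_le hdecay htail)
  refine ⟨S, hS, ?_⟩
  have hB : 0 ≤ B := (norm_nonneg _).trans (h M M hM le_rfl)
  calc ‖S‖ ≤ C * (M : ℝ) ^ (-s.re) :=
        le_of_tendsto hS.norm (Eventually.of_forall fun N ↦ htail M N le_rfl)
    _ ≤ B * (‖s‖ + 1) / (s.re * (M : ℝ) ^ s.re) := by
        rw [Real.rpow_neg (by positivity), ← div_eq_mul_inv, ← div_div]
        gcongr
        rw [mul_div_assoc, add_div, add_comm (‖s‖ / s.re)]
        exact mul_le_mul_of_nonneg_left (by gcongr; exact (one_le_div hs).2 hs1) hB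

/-- **Tail bound via partial summation.**
Let `a : ℕ → ℂ` and `B ≥ 0` with `|∑_{n=N₁}^{N₂} a(n)| ≤ B` for all `1 ≤ N₁ ≤ N₂`.
Let `s ∈ ℂ` with `0 < Re(s) ≤ 1` and `M ≥ 1`. Then `∑_{n ≥ M} a(n) n^{−s}` converges
(as the limit of its partial sums) and its value `S` satisfies
`|S| ≤ B (|s| + 1) / (Re(s) · M^{Re(s)})`. -/
theorem stmt11 (a : ℕ → ℂ) (B : ℝ) (hB : 0 ≤ B)
    (h : ∀ N₁ N₂ : ℕ, 1 ≤ N₁ → N₁ ≤ N₂ → ‖∑ n ∈ Finset.Icc N₁ N₂, a n‖ ≤ B)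
    (s : ℂ) (hs : 0 < s.re) (hs1 : s.re ≤ 1) (M : ℕ) (hM : 1 ≤ M) :
    ∃ S : ℂ, Filter.Tendsto (fun N : ℕ => ∑ n ∈ Finset.Ico M N, a n * (n : ℂ) ^ (-s))
        Filter.atTop (nhds S) ∧
      ‖S‖ ≤ B * (‖s‖ + 1) / (s.re * (M : ℝ) ^ s.re) :=
  stmt11_general a B h s hs hs1 M hM
end

section
/- Let χ₁ be a primitive Dirichlet character modulo q₁, let q be a multiple of q₁, and let χ be the Dirichlet character modulo q induced by χ₁. Then for every integer m with gcd(m, q) = 1, ∑_{r=0}^{q−1} χ(r) e^{2πi m r / q} = conj(χ(m)) · χ₁(q/q₁) · μ(q/q₁) · τ(χ₁), where μ is the Möbius function and τ(χ₁) = ∑_{n=1}^{q₁} χ₁(n) e^{2πi n / q₁} is the Gauss sum of χ₁. -/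
/-!
Writing `q = q₁ d`, the induced character is `χ(r) = χ₁(r) [gcd(r, d) = 1]`. Twisting by a unit
`m` multiplies the Gauss sum by `χ(m)⁻¹ = conj χ(m)`, and Möbius inversion of the coprimality
condition gives `τ(χ) = ∑_{k ∣ d} μ(k) χ₁(k) S(q/k)` with `S(N) = ∑_{s mod N} χ₁(s) e(s/N)`.
As `χ₁` has period `q₁`, shifting `s` by `q₁` multiplies `S(N)` by `e(q₁/N)`, which is `≠ 1`
unless `N = q₁`; so only `k = d` survives, leaving `μ(d) χ₁(d) τ(χ₁)`.
-/

open Finset ArithmeticFunction Complex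
open scoped ArithmeticFunction.Moebius

lemma sum_mul_addChar_eq_zero_of_add_right_invariant {G R : Type*} [AddCommGroup G] [Fintype G]
    [CommRing R] [NoZeroDivisors R] (ψ : AddChar G R) {f : G → R} {a : G}
    (hf : ∀ x, f (x + a) = f x) (hψ : ψ a ≠ 1) :
    ∑ x, f x * ψ x = 0 := by
  have hshift : ∑ x, f x * ψ x = ψ a * ∑ x, f x * ψ x := by
    calc ∑ x, f x * ψ x = ∑ x, f (x + a) * ψ (x + a) :=
          (Fintype.sum_equiv (Equiv.addRight a) _ _ fun _ => rfl).symm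
      _ = ψ a * ∑ x, f x * ψ x := by
          simp only [hf, AddChar.map_add_eq_mul, mul_sum]
          exact sum_congr rfl fun x _ => by ring
  have : (ψ a - 1) * ∑ x, f x * ψ x = 0 := by linear_combination -hshift
  exact (mul_eq_zero.mp this).resolve_left (sub_ne_zero.mpr hψ)

lemma sum_range_natCast_zmod {M : Type*} [AddCommMonoid M] (N : ℕ) [NeZero N] (g : ZMod N → M) :
    ∑ r ∈ range N, g r = ∑ x, g x :=
  sum_nbij' (↑) ZMod.val (fun _ _ => mem_univ _) (fun x _ => mem_range.mpr x.val_lt)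
    (fun _ hr => ZMod.val_cast_of_lt (mem_range.mp hr)) (fun x _ => ZMod.natCast_zmod_val x)
    (fun _ _ => rfl)

lemma sum_Icc_natCast_zmod {M : Type*} [AddCommMonoid M] (N : ℕ) [NeZero N] (g : ZMod N → M) :
    ∑ n ∈ Icc 1 N, g n = ∑ x, g x := by
  rw [← Ico_add_one_right_eq_Icc, ← zero_add 1, ← sum_Ico_add', ← range_eq_Ico]
  push_cast
  rw [sum_range_natCast_zmod N fun x => g (x + 1)]
  exact Fintype.sum_equiv (Equiv.addRight 1) _ _ fun _ => rfl

lemma sum_range_filter_dvd {M : Type*} [AddCommMonoid M] {k q : ℕ} (hk : 0 < k) (hkq : k ∣ q)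
    (f : ℕ → M) : ∑ r ∈ range q with k ∣ r, f r = ∑ s ∈ range (q / k), f (k * s) := by
  refine sum_nbij' (· / k) (k * ·) ?_ ?_ ?_ ?_ ?_
  · intro r hr
    rw [mem_filter, mem_range] at hr
    exact mem_range.mpr (Nat.div_lt_div_of_lt_of_dvd hkq hr.1)
  · intro s hs
    exact mem_filter.mpr ⟨mem_range.mpr ((Nat.lt_div_iff_mul_lt' hkq s).mp (mem_range.mp hs)),
      dvd_mul_right k s⟩
  · intro r hr
    exact Nat.mul_div_cancel' (mem_filter.mp hr).2
  · intro s _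
    exact Nat.mul_div_cancel_left s hk
  · intro r hr
    rw [Nat.mul_div_cancel' (mem_filter.mp hr).2]

lemma sum_moebius_divisors (n : ℕ) : ∑ d ∈ n.divisors, μ d = if n = 1 then 1 else 0 := by
  rw [← coe_mul_zeta_apply, moebius_mul_coe_zeta, one_apply]

lemma sum_moebius_divisors_filter_dvd {d : ℕ} (hd : d ≠ 0) (r : ℕ) :
    ∑ k ∈ d.divisors with k ∣ r, μ k = if r.Coprime d then 1 else 0 := by
  have : {k ∈ d.divisors | k ∣ r} = (r.gcd d).divisors := by
    rw [← Nat.divisors_filter_dvd_of_dvd hd (Nat.gcd_dvd_right r d)]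
    exact filter_congr fun k hk => by rw [Nat.dvd_gcd_iff, and_iff_left (Nat.dvd_of_mem_divisors hk)]
  simp only [this, sum_moebius_divisors, Nat.Coprime]

lemma stdAddChar_natCast (N : ℕ) [NeZero N] (r : ℕ) :
    ZMod.stdAddChar (r : ZMod N) = exp (2 * Real.pi * I * r / N) := by
  simpa using ZMod.stdAddChar_coe (N := N) r

lemma stdAddChar_natCast_mul {k M N : ℕ} [NeZero M] [NeZero N] (h : k * M = N) (hk : k ≠ 0)
    (s : ℕ) : ZMod.stdAddChar ((k * s : ℕ) : ZMod N) = ZMod.stdAddChar (s : ZMod M) := by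
  subst h
  rw [stdAddChar_natCast, stdAddChar_natCast]
  push_cast
  rw [mul_left_comm, mul_div_mul_left _ _ (Nat.cast_ne_zero.mpr hk)]

lemma sum_range_cast_mul_stdAddChar_eq_zero {q₁ N : ℕ} [NeZero N] (h : q₁ ∣ N) (hne : q₁ ≠ N)
    (f : ZMod q₁ → ℂ) : ∑ s ∈ range N, f s * ZMod.stdAddChar (s : ZMod N) = 0 := by
  simp_rw [← ZMod.cast_natCast h (R := ZMod q₁)]
  rw [sum_range_natCast_zmod N fun x => f x.cast * ZMod.stdAddChar x]
  refine sum_mul_addChar_eq_zero_of_add_right_invariant _ (a := (q₁ : ZMod N)) (fun x => ?_) ?_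
  · rw [ZMod.cast_add h, ZMod.cast_natCast h, ZMod.natCast_self, add_zero]
  · rw [← AddChar.map_zero_eq_one (ZMod.stdAddChar (N := N)), ZMod.injective_stdAddChar.ne_iff,
      Ne, ZMod.natCast_eq_zero_iff]
    exact fun hN => hne (Nat.dvd_antisymm h hN)

namespace DirichletCharacter

lemma changeLevel_mul_apply_natCast {q₁ d : ℕ} (χ₁ : DirichletCharacter ℂ q₁) (r : ℕ) :
    changeLevel (dvd_mul_right q₁ d) χ₁ r = if r.Coprime d then χ₁ r else 0 := by
  have hχ : changeLevel (dvd_mul_right q₁ d) χ₁ r = if r.Coprime (q₁ * d) then χ₁ r else 0 := by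
    split_ifs with h
    · simpa using changeLevel_eq_cast_of_dvd' χ₁ _ (Nat.isCoprime_iff_coprime.mpr h)
    · simpa using (apply_eq_zero_iff _ (r : ℤ)).mpr (mt Nat.isCoprime_iff_coprime.mp h)
  by_cases h₁ : r.Coprime q₁
  · simp only [hχ, Nat.coprime_mul_iff_right, and_iff_right h₁]
  · have : χ₁ r = 0 := by
      simpa using (apply_eq_zero_iff _ (r : ℤ)).mpr (mt Nat.isCoprime_iff_coprime.mp h₁)
    simp [hχ, this]

lemma sum_range_filter_dvd_mul_stdAddChar {q₁ k M q : ℕ} [NeZero M] [NeZero q] (h : k * M = q)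
    (χ₁ : DirichletCharacter ℂ q₁) :
    ∑ r ∈ range q with k ∣ r, χ₁ r * ZMod.stdAddChar (r : ZMod q) =
      χ₁ k * ∑ s ∈ range M, χ₁ s * ZMod.stdAddChar (s : ZMod M) := by
  have hk : k ≠ 0 := by rintro rfl; exact NeZero.ne q (by simp [← h])
  have hM : q / k = M := by rw [← h, Nat.mul_div_cancel_left M (Nat.pos_of_ne_zero hk)]
  rw [sum_range_filter_dvd (Nat.pos_of_ne_zero hk) ⟨M, h.symm⟩, hM, mul_sum]
  refine sum_congr rfl fun s _ => ?_
  rw [stdAddChar_natCast_mul h hk, Nat.cast_mul, map_mul, mul_assoc]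

lemma gaussSum_stdAddChar_eq_sum_Icc {N : ℕ} [NeZero N] (χ : DirichletCharacter ℂ N) :
    gaussSum χ ZMod.stdAddChar = ∑ n ∈ Icc 1 N, χ n * exp (2 * Real.pi * I * n / N) := by
  simp_rw [← stdAddChar_natCast]
  exact (sum_Icc_natCast_zmod N fun x => χ x * ZMod.stdAddChar x).symm

lemma gaussSum_stdAddChar_mulShift_intCast {N : ℕ} [NeZero N] (χ : DirichletCharacter ℂ N)
    (m : ℤ) : gaussSum χ (ZMod.stdAddChar.mulShift m) =
      ∑ r ∈ range N, χ r * exp (2 * Real.pi * I * m * r / N) := by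
  rw [gaussSum, ← sum_range_natCast_zmod]
  refine sum_congr rfl fun r _ => ?_
  rw [AddChar.mulShift_apply, ← Int.cast_natCast r, ← Int.cast_mul, ZMod.stdAddChar_coe]
  push_cast
  ring_nf

theorem gaussSum_changeLevel_stdAddChar {q₁ d : ℕ} [NeZero q₁] [NeZero d]
    (χ₁ : DirichletCharacter ℂ q₁) :
    gaussSum (changeLevel (dvd_mul_right q₁ d) χ₁) ZMod.stdAddChar =
      χ₁ d * μ d * gaussSum χ₁ ZMod.stdAddChar := by
  have partialSum : ∀ k ∈ d.divisors,
      ∑ r ∈ range (q₁ * d) with k ∣ r, χ₁ r * ZMod.stdAddChar (r : ZMod (q₁ * d)) =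
        if k = d then χ₁ d * gaussSum χ₁ ZMod.stdAddChar else 0 := by
    intro k hk
    split_ifs with hkd
    · rw [hkd, sum_range_filter_dvd_mul_stdAddChar (mul_comm d q₁),
        sum_range_natCast_zmod q₁ fun x => χ₁ x * ZMod.stdAddChar x]
      rfl
    · obtain ⟨j, hj⟩ := Nat.dvd_of_mem_divisors hk
      have hj0 : j ≠ 0 := by rintro rfl; exact NeZero.ne d (by simpa using hj)
      have hj1 : q₁ ≠ q₁ * j := fun h => hkd (by
        rw [hj, ← Nat.eq_of_mul_eq_mul_left (Nat.pos_of_neZero q₁) ((mul_one q₁).trans h), mul_one])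
      have : NeZero (q₁ * j) := ⟨mul_ne_zero (NeZero.ne q₁) hj0⟩
      rw [sum_range_filter_dvd_mul_stdAddChar (M := q₁ * j) (by rw [hj]; ring),
        sum_range_cast_mul_stdAddChar_eq_zero (dvd_mul_right q₁ j) hj1, mul_zero]
  calc gaussSum (changeLevel (dvd_mul_right q₁ d) χ₁) ZMod.stdAddChar
      = ∑ r ∈ range (q₁ * d), ∑ k ∈ d.divisors with k ∣ r,
          (μ k : ℂ) * (χ₁ r * ZMod.stdAddChar (r : ZMod (q₁ * d))) := by
        rw [gaussSum, ← sum_range_natCast_zmod]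
        refine sum_congr rfl fun r _ => ?_
        rw [changeLevel_mul_apply_natCast, ← sum_mul, ← Int.cast_sum,
          sum_moebius_divisors_filter_dvd (NeZero.ne d)]
        split_ifs <;> simp
    _ = ∑ k ∈ d.divisors, (μ k : ℂ) *
          ∑ r ∈ range (q₁ * d) with k ∣ r, χ₁ r * ZMod.stdAddChar (r : ZMod (q₁ * d)) := by
        simp_rw [mul_sum]
        exact sum_comm' fun r k => by simp only [mem_filter]; tauto
    _ = χ₁ d * μ d * gaussSum χ₁ ZMod.stdAddChar := by
        rw [sum_congr rfl fun k hk => by rw [partialSum k hk]]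
        simp only [mul_ite, mul_zero, sum_ite_eq', Nat.mem_divisors_self d (NeZero.ne d), if_true]
        ring

end DirichletCharacter

theorem stmt15_general (q₁ q : ℕ) (hdvd : q₁ ∣ q)
    (χ₁ : DirichletCharacter ℂ q₁)
    (χ : DirichletCharacter ℂ q) (hχ : χ = DirichletCharacter.changeLevel hdvd χ₁)
    (τ : ℂ)
    (hτ : τ = ∑ n ∈ Finset.Icc 1 q₁,
      χ₁ ((n : ℕ) : ZMod q₁) * Complex.exp (2 * (Real.pi : ℂ) * Complex.I * (n : ℂ) / (q₁ : ℂ)))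
    (m : ℤ) (hm : IsCoprime m (q : ℤ)) :
    ∑ r ∈ Finset.range q,
        χ ((r : ℕ) : ZMod q) * Complex.exp (2 * (Real.pi : ℂ) * Complex.I * (m : ℂ) * (r : ℂ) / (q : ℂ))
      = (starRingEnd ℂ) (χ ((m : ℤ) : ZMod q)) * χ₁ (((q / q₁ : ℕ)) : ZMod q₁) *
          ((ArithmeticFunction.moebius (q / q₁) : ℤ) : ℂ) * τ := by
  obtain rfl | hq := eq_zero_or_neZero q
  · simp
  obtain ⟨d, rfl⟩ := hdvd
  have : NeZero q₁ := ⟨left_ne_zero_of_mul (NeZero.ne (q₁ * d))⟩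
  have : NeZero d := ⟨right_ne_zero_of_mul (NeZero.ne (q₁ * d))⟩
  rw [← DirichletCharacter.gaussSum_stdAddChar_eq_sum_Icc] at hτ
  rw [← DirichletCharacter.gaussSum_stdAddChar_mulShift_intCast, ← ZMod.coe_unitOfIsCoprime m hm,
    gaussSum_mulShift_eq, ← MulChar.star_apply', hχ,
    DirichletCharacter.gaussSum_changeLevel_stdAddChar, hτ,
    Nat.mul_div_cancel_left d (Nat.pos_of_neZero q₁)]
  simp only [RCLike.star_def]
  ring

/-- **Gauss sum of an induced character.**
Let `χ₁` be a primitive Dirichlet character mod `q₁`, let `q₁ ∣ q`, and let `χ` be the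
character mod `q` induced by `χ₁`. Then for every integer `m` coprime to `q`,
`∑_{r=0}^{q−1} χ(r) e^{2πimr/q} = conj(χ(m)) χ₁(q/q₁) μ(q/q₁) τ(χ₁)`,
where `μ` is the Möbius function and `τ(χ₁) = ∑_{n=1}^{q₁} χ₁(n) e^{2πin/q₁}`. -/
theorem stmt15 (q₁ q : ℕ) (hq₁ : 0 < q₁) (hq : 0 < q) (hdvd : q₁ ∣ q)
    (χ₁ : DirichletCharacter ℂ q₁) (hprim : χ₁.IsPrimitive)
    (χ : DirichletCharacter ℂ q) (hχ : χ = DirichletCharacter.changeLevel hdvd χ₁)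
    (τ : ℂ)
    (hτ : τ = ∑ n ∈ Finset.Icc 1 q₁,
      χ₁ ((n : ℕ) : ZMod q₁) * Complex.exp (2 * (Real.pi : ℂ) * Complex.I * (n : ℂ) / (q₁ : ℂ)))
    (m : ℤ) (hm : IsCoprime m (q : ℤ)) :
    ∑ r ∈ Finset.range q,
        χ ((r : ℕ) : ZMod q) * Complex.exp (2 * (Real.pi : ℂ) * Complex.I * (m : ℂ) * (r : ℂ) / (q : ℂ))
      = (starRingEnd ℂ) (χ ((m : ℤ) : ZMod q)) * χ₁ (((q / q₁ : ℕ)) : ZMod q₁) *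
          ((ArithmeticFunction.moebius (q / q₁) : ℤ) : ℂ) * τ :=
  stmt15_general q₁ q hdvd χ₁ χ hχ τ hτ m hm
end
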